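/- arXiv:1310.6624 — 6 statements merged into one kernel-verified Lean document; each statement's English description precedes it below -/
import Mathlib

section
/- Let C be an r×r symmetrizable Cartan matrix (C_{ii} = 2, C_{ij} ≤ 0 for i ≠ j, and there exist d_i > 0 with d_i C_{ij} = d_j C_{ji}). Define the 2r×2r matrix B_C as the block matrix with blocks [[0, Cᵗ], [-Cᵗ, 0]]. Then applying the matrix mutations μ_1, μ_2, ..., μ_r (in the first r indices, in any order) to B_C yields -B_C. -/
/-- Matrix mutation at index `k`. -/
def matMut {I : Type*} [DecidableEq I] (B : I → I → ℚ) (k : I) : I → I → ℚ :=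
  fun i j =>
    if i = k ∨ j = k then -B i j
    else B i j + (|B i k| * B k j + B i k * |B k j|) / 2

/-- The block matrix `[[0, Cᵗ], [-Cᵗ, 0]]` associated to a Cartan matrix `C`,
indexed by two copies of `Fin r` (the left copy playing the role of `{1,…,r}`). -/
def BCmat {r : ℕ} (C : Fin r → Fin r → ℤ) : (Fin r ⊕ Fin r) → (Fin r ⊕ Fin r) → ℚ :=
  fun i j =>
    match i, j with
    | Sum.inl a, Sum.inr b => (C b a : ℚ)
    | Sum.inr a, Sum.inl b => -(C b a : ℚ)
    | _, _ => 0

/-!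
After mutating `B_C` at a set `S` of first-block indices, the matrix is still determined by `C`
and the signs `σ a = ±1` (`-1` iff `a ∈ S`): its `(1,2)` block is `σ a * C b a`, its `(2,1)` block
is minus the transpose of that, and its `(2,2)` block is `(σ b - σ a) * C b a`. Mutating at a new
index `k` preserves this shape: row and column `k` change sign, and since `C k k = 2` while the
off-diagonal entries of `C` are `≤ 0`, the correction term in the `(2,2)` block is exactly the
change of `σ k`. Once `S` is everything, the `(2,2)` block vanishes again and the off-diagonal
blocks have changed sign.
-/

section matMut

variable {I : Type*} [DecidableEq I] (B : I → I → ℚ) {i j k : I}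

theorem matMut_apply_left (j : I) : matMut B k k j = -B k j :=
  if_pos (Or.inl rfl)

theorem matMut_apply_right (i : I) : matMut B k i k = -B i k :=
  if_pos (Or.inr rfl)

theorem matMut_apply_of_ne (hi : i ≠ k) (hj : j ≠ k) :
    matMut B k i j = B i j + (|B i k| * B k j + B i k * |B k j|) / 2 :=
  if_neg (by tauto)

theorem matMut_apply_of_left_eq_zero (hi : i ≠ k) (hj : j ≠ k) (h : B i k = 0) :
    matMut B k i j = B i j := by
  simp [matMut_apply_of_ne B hi hj, h]

theorem matMut_apply_of_right_eq_zero (hi : i ≠ k) (hj : j ≠ k) (h : B k j = 0) :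
    matMut B k i j = B i j := by
  simp [matMut_apply_of_ne B hi hj, h]

end matMut

section Cartan

variable {ι : Type*} [DecidableEq ι]

def flipSign (S : Finset ι) (a : ι) : ℚ := if a ∈ S then -1 else 1

def mutBC (C : ι → ι → ℤ) (S : Finset ι) : ι ⊕ ι → ι ⊕ ι → ℚ
  | .inl a, .inr b => flipSign S a * C b a
  | .inr a, .inl b => -(flipSign S b * C b a)
  | .inr a, .inr b => (flipSign S b - flipSign S a) * C b a
  | .inl _, .inl _ => 0

theorem flipSign_insert {S : Finset ι} {k : ι} (hk : k ∉ S) (a : ι) :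
    flipSign (insert k S) a = flipSign S a - if a = k then 2 else 0 := by
  by_cases ha : a = k
  · subst ha
    simp only [flipSign, Finset.mem_insert_self, hk, if_true, if_false]
    norm_num
  · simp [flipSign, ha]

omit [DecidableEq ι] in
theorem abs_cast_of_offDiag {C : ι → ι → ℤ} (hoff : ∀ i j, i ≠ j → C i j ≤ 0) {i j : ι}
    (h : i ≠ j) : |(C i j : ℚ)| = -C i j :=
  abs_of_nonpos (by exact_mod_cast hoff i j h)

theorem mutation_correction_eq {C : ι → ι → ℤ} (hdiag : ∀ i, C i i = 2)
    (hoff : ∀ i j, i ≠ j → C i j ≤ 0) (k a b : ι) :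
    (|(C k a : ℚ)| * C b k - C k a * |(C b k : ℚ)|) / 2
      = ((if a = k then 2 else 0) - (if b = k then 2 else 0)) * C b a := by
  by_cases ha : a = k <;> by_cases hb : b = k
  · subst ha hb; simp only [if_true]; ring
  · subst ha; simp [hb, hdiag, abs_cast_of_offDiag hoff hb]
  · subst hb
    simp only [abs_cast_of_offDiag hoff (Ne.symm ha), hdiag, Int.cast_ofNat, Nat.abs_ofNat, ha,
      if_true, if_false]
    ring
  · simp [ha, hb, abs_cast_of_offDiag hoff (Ne.symm ha), abs_cast_of_offDiag hoff hb]

theorem matMut_mutBC_inr_inr {C : ι → ι → ℤ} (hdiag : ∀ i, C i i = 2)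
    (hoff : ∀ i j, i ≠ j → C i j ≤ 0) {S : Finset ι} {k : ι} (hk : k ∉ S) (a b : ι) :
    matMut (mutBC C S) (.inl k) (.inr a) (.inr b) = mutBC C (insert k S) (.inr a) (.inr b) := by
  have hσk : flipSign S k = 1 := if_neg hk
  have h := mutation_correction_eq hdiag hoff k a b
  rw [matMut_apply_of_ne _ Sum.inr_ne_inl Sum.inr_ne_inl]
  simp only [mutBC, flipSign_insert hk, hσk, one_mul, abs_neg]
  linear_combination h

theorem matMut_mutBC {C : ι → ι → ℤ} (hdiag : ∀ i, C i i = 2)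
    (hoff : ∀ i j, i ≠ j → C i j ≤ 0) {S : Finset ι} {k : ι} (hk : k ∉ S) :
    matMut (mutBC C S) (.inl k) = mutBC C (insert k S) := by
  have hσk : flipSign S k = 1 := if_neg hk
  funext i j
  rcases i with a | a <;> rcases j with b | b
  · simp [matMut, mutBC]
  · by_cases ha : a = k
    · subst ha
      rw [matMut_apply_left]
      simp only [mutBC, flipSign_insert hk, hσk, if_true]
      ring
    · rw [matMut_apply_of_left_eq_zero _ (Sum.inl_injective.ne ha) Sum.inr_ne_inl rfl]
      simp [mutBC, flipSign_insert hk, ha]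
  · by_cases hb : b = k
    · subst hb
      rw [matMut_apply_right]
      simp only [mutBC, flipSign_insert hk, hσk, if_true]
      ring
    · rw [matMut_apply_of_right_eq_zero _ Sum.inr_ne_inl (Sum.inl_injective.ne hb) rfl]
      simp [mutBC, flipSign_insert hk, hb]
  · exact matMut_mutBC_inr_inr hdiag hoff hk a b

theorem foldl_matMut_mutBC {C : ι → ι → ℤ} (hdiag : ∀ i, C i i = 2)
    (hoff : ∀ i j, i ≠ j → C i j ≤ 0) {l : List ι} (hl : l.Nodup) {S : Finset ι}
    (hS : ∀ x ∈ l, x ∉ S) :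
    l.foldl (fun B k => matMut B (.inl k)) (mutBC C S) = mutBC C (S ∪ l.toFinset) := by
  induction l generalizing S with
  | nil => simp
  | cons k l ih =>
    obtain ⟨hkl, hl⟩ := List.nodup_cons.mp hl
    have hS' : ∀ x ∈ l, x ∉ insert k S := by
      intro x hx
      simp only [Finset.mem_insert, not_or]
      exact ⟨fun h => hkl (h ▸ hx), hS x (List.mem_cons_of_mem k hx)⟩
    rw [List.foldl_cons, matMut_mutBC hdiag hoff (hS k List.mem_cons_self), ih hl hS']
    congr 1
    ext x
    simp

end Cartan

theorem mutBC_empty {r : ℕ} (C : Fin r → Fin r → ℤ) : mutBC C ∅ = BCmat C := by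
  funext i j
  rcases i with a | a <;> rcases j with b | b <;> simp [mutBC, BCmat, flipSign]

theorem mutBC_univ {r : ℕ} (C : Fin r → Fin r → ℤ) : mutBC C Finset.univ = -BCmat C := by
  funext i j
  rcases i with a | a <;> rcases j with b | b <;> simp [mutBC, BCmat, flipSign]

theorem mutations_BC_eq_neg_general {r : ℕ} (C : Fin r → Fin r → ℤ)
    (hdiag : ∀ i, C i i = 2) (hoff : ∀ i j, i ≠ j → C i j ≤ 0)
    (l : List (Fin r)) (hnodup : l.Nodup) (hall : ∀ x, x ∈ l) :
    l.foldl (fun B k => matMut B (Sum.inl k)) (BCmat C) = -(BCmat C) := by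
  have hl : l.toFinset = Finset.univ := Finset.eq_univ_of_forall (by simpa using hall)
  calc l.foldl (fun B k => matMut B (Sum.inl k)) (BCmat C)
      = l.foldl (fun B k => matMut B (Sum.inl k)) (mutBC C ∅) := by rw [mutBC_empty]
    _ = mutBC C (∅ ∪ l.toFinset) := foldl_matMut_mutBC hdiag hoff hnodup (by simp)
    _ = -BCmat C := by rw [Finset.empty_union, hl, mutBC_univ]

/-- Mutating `B_C = [[0,Cᵗ],[-Cᵗ,0]]` once at each of the first `r` indices,
in any order, yields `-B_C`. -/
theorem mutations_BC_eq_neg {r : ℕ} (C : Fin r → Fin r → ℤ)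
    (hdiag : ∀ i, C i i = 2) (hoff : ∀ i j, i ≠ j → C i j ≤ 0)
    (d : Fin r → ℚ) (hd : ∀ i, 0 < d i)
    (hsym : ∀ i j, d i * (C i j : ℚ) = d j * (C j i : ℚ))
    (l : List (Fin r)) (hnodup : l.Nodup) (hall : ∀ x, x ∈ l) :
    l.foldl (fun B k => matMut B (Sum.inl k)) (BCmat C) = -(BCmat C) :=
  mutations_BC_eq_neg_general C hdiag hoff l hnodup hall
end

section
/- Let C be an r×r symmetrizable Cartan matrix, B_C the block matrix [[0, Cᵗ],[-Cᵗ,0]] of size 2r, and σ the permutation of {1,...,2r} exchanging i and i+r. Then (μ_1 ∘ ⋯ ∘ μ_r)(B_C)_{ij} = (B_C)_{σ(i)σ(j)} for all i, j; that is, the mutation sequence μ_1,...,μ_r is a σ-period of B_C. -/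
section

variable {ι : Type*} [DecidableEq ι]

def mutatedBC (C : ι → ι → ℤ) (S : Finset ι) : ι ⊕ ι → ι ⊕ ι → ℚ
  | .inl _, .inl _ => 0
  | .inl a, .inr b => (if a ∈ S then -1 else 1) * C b a
  | .inr a, .inl b => (if b ∈ S then 1 else -1) * C b a
  | .inr a, .inr b => 2 * C b a * ((if a ∈ S then 1 else 0) - (if b ∈ S then 1 else 0))

theorem matMut_mutatedBC {C : ι → ι → ℤ} (hdiag : ∀ i, C i i = 2)
    (hoff : ∀ i j, i ≠ j → C i j ≤ 0) {S : Finset ι} {k : ι} (hk : k ∉ S) :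
    matMut (mutatedBC C S) (.inl k) = mutatedBC C (insert k S) := by
  have habs : ∀ a b, a ≠ b → |(C a b : ℚ)| = -C a b := fun a b h =>
    abs_of_nonpos (mod_cast hoff a b h)
  have hkk : (C k k : ℚ) = 2 := mod_cast hdiag k
  funext i j
  rcases i with a | a <;> rcases j with b | b
  · simp [matMut, mutatedBC]
  · by_cases hak : a = k <;> simp [matMut, mutatedBC, hak, hk]
  · by_cases hbk : b = k <;> simp [matMut, mutatedBC, hbk, hk]
  · simp only [matMut, mutatedBC, reduceCtorEq, or_self, if_false, hk, Finset.mem_insert]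
    by_cases hak : a = k <;> by_cases hbk : b = k
    · subst hak hbk; simp [hkk]
    · subst hak; simp [hkk, hbk, habs b a hbk]; split_ifs <;> ring
    · subst hbk; simp [hkk, hak, habs b a (Ne.symm hak)]; split_ifs <;> ring
    · simp [hak, hbk, habs k a (Ne.symm hak), habs b k hbk]

theorem foldl_matMut_mutatedBC {C : ι → ι → ℤ} (hdiag : ∀ i, C i i = 2)
    (hoff : ∀ i j, i ≠ j → C i j ≤ 0) {l : List ι} (hl : l.Nodup) {S : Finset ι}
    (hlS : ∀ k ∈ l, k ∉ S) :
    l.foldl (fun B k => matMut B (.inl k)) (mutatedBC C S) = mutatedBC C (S ∪ l.toFinset) := by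
  induction l generalizing S with
  | nil => simp
  | cons k l ih =>
    obtain ⟨hkl, hl⟩ := List.nodup_cons.mp hl
    have hlS' : ∀ k' ∈ l, k' ∉ insert k S := fun k' hk' => by
      simpa [ne_of_mem_of_not_mem hk' hkl] using hlS k' (by simp [hk'])
    rw [List.foldl_cons, matMut_mutatedBC hdiag hoff (hlS k List.mem_cons_self), ih hl hlS',
      List.toFinset_cons, Finset.union_insert, Finset.insert_union]

end

theorem mutatedBC_empty {r : ℕ} (C : Fin r → Fin r → ℤ) : mutatedBC C ∅ = BCmat C := by
  funext i j
  rcases i with a | a <;> rcases j with b | b <;> simp [mutatedBC, BCmat]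

theorem mutatedBC_univ {r : ℕ} (C : Fin r → Fin r → ℤ) (i j : Fin r ⊕ Fin r) :
    mutatedBC C Finset.univ i j = BCmat C i.swap j.swap := by
  rcases i with a | a <;> rcases j with b | b <;> simp [mutatedBC, BCmat]

theorem mutation_sequence_sigma_period_general {r : ℕ} (C : Fin r → Fin r → ℤ)
    (hdiag : ∀ i, C i i = 2) (hoff : ∀ i j, i ≠ j → C i j ≤ 0) :
    ∀ i j, ((List.finRange r).foldl (fun B k => matMut B (Sum.inl k)) (BCmat C)) i j
      = BCmat C (Sum.swap i) (Sum.swap j) := by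
  intro i j
  have hfold := foldl_matMut_mutatedBC hdiag hoff (List.nodup_finRange r) (S := ∅)
    fun _ _ => Finset.notMem_empty _
  rw [mutatedBC_empty, Finset.empty_union, List.toFinset_finRange] at hfold
  rw [hfold, mutatedBC_univ]

/-- The mutation sequence `μ_1, …, μ_r` is a `σ`-period of `B_C`, where `σ` is the
permutation exchanging `i` and `i + r` (i.e. `Sum.swap` on `Fin r ⊕ Fin r`). -/
theorem mutation_sequence_sigma_period {r : ℕ} (C : Fin r → Fin r → ℤ)
    (hdiag : ∀ i, C i i = 2) (hoff : ∀ i j, i ≠ j → C i j ≤ 0)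
    (d : Fin r → ℚ) (hd : ∀ i, 0 < d i)
    (hsym : ∀ i j, d i * (C i j : ℚ) = d j * (C j i : ℚ)) :
    ∀ i j, ((List.finRange r).foldl (fun B k => matMut B (Sum.inl k)) (BCmat C)) i j
      = BCmat C (Sum.swap i) (Sum.swap j) :=
  mutation_sequence_sigma_period_general C hdiag hoff
end

section
/- Let π : I → Ĩ be a surjection of finite index sets and B an I×I exchange matrix such that whenever π(i) = π(j) for distinct i, j one has B_{ij} = 0. Define B̃_{kℓ} = Σ_{π(i)=k, π(j)=ℓ} B_{ij}. Fix an index k ∈ I on which π is injective (identify k with π(k)), and suppose that for all j, ℓ with π(j) = π(ℓ), the entries B_{jk} and B_{ℓk} have the same sign (i.e., are both ≥ 0 or both ≤ 0). Then Σ_{π(j)=i} max(B_{jk}, 0) = max(Σ_{π(j)=i} B_{jk}, 0) for every i ∈ Ĩ, and consequently the amalgamation of μ_k(B) along π equals μ_k(B̃). -/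
open Finset

/-- Amalgamation of `B` along `π`: sum entries over the fibers of `π`. -/
def amalg {I J : Type*} [Fintype I] [DecidableEq J] (π : I → J)
    (B : I → I → ℚ) : J → J → ℚ :=
  fun p q => ∑ a ∈ univ.filter (fun a => π a = p),
    ∑ b ∈ univ.filter (fun b => π b = q), B a b

/-!
Off the row and column of `k`, the mutation rule is linear in `B i j` and bilinear in the pair
`(column k, row k)`, with absolute values inserted. Summing over fibers therefore commutes with it
as soon as `∑ |B a k| = |∑ B a k|` on every fiber, i.e. as soon as each fiber is sign-coherent in
column `k` (and then in row `k`, which has the same signs by symmetrizability). Injectivity of `π`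
at `k` makes the row and column of `k` in the amalgamated matrix the fiber sums of those of `B`.
-/

def SignCoherentOn {ι α : Type*} [Zero α] [LE α] (s : Finset ι) (f : ι → α) : Prop :=
  (∀ j ∈ s, 0 ≤ f j) ∨ (∀ j ∈ s, f j ≤ 0)

namespace SignCoherentOn

variable {ι α : Type*} {s : Finset ι} {f : ι → α}

theorem of_pairwise [LinearOrder α] [Zero α]
    (h : ∀ j ∈ s, ∀ l ∈ s, (0 ≤ f j ∧ 0 ≤ f l) ∨ (f j ≤ 0 ∧ f l ≤ 0)) :
    SignCoherentOn s f := by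
  by_contra hs
  simp only [SignCoherentOn, not_or, not_forall, not_le] at hs
  obtain ⟨⟨j, hj, hfj⟩, ⟨l, hl, hfl⟩⟩ := hs
  rcases h j hj l hl with ⟨hj', _⟩ | ⟨_, hl'⟩
  · exact (not_le.mpr hfj) hj'
  · exact (not_le.mpr hfl) hl'

theorem of_nonneg_mul [Semiring α] [PartialOrder α] [IsOrderedRing α] (hf : SignCoherentOn s f)
    {g : ι → α} (h : ∀ j ∈ s, ∃ c, 0 ≤ c ∧ g j = c * f j) : SignCoherentOn s g := by
  rcases hf with hf | hf
  · refine Or.inl fun j hj => ?_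
    obtain ⟨c, hc, hg⟩ := h j hj
    exact hg ▸ mul_nonneg hc (hf j hj)
  · refine Or.inr fun j hj => ?_
    obtain ⟨c, hc, hg⟩ := h j hj
    exact hg ▸ mul_nonpos_of_nonneg_of_nonpos hc (hf j hj)

variable [AddCommGroup α] [LinearOrder α] [IsOrderedAddMonoid α]

theorem sum_abs (hf : SignCoherentOn s f) : ∑ j ∈ s, |f j| = |∑ j ∈ s, f j| := by
  rcases hf with hf | hf
  · rw [abs_of_nonneg (sum_nonneg hf)]
    exact sum_congr rfl fun j hj => abs_of_nonneg (hf j hj)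
  · rw [abs_of_nonpos (sum_nonpos hf), ← sum_neg_distrib]
    exact sum_congr rfl fun j hj => abs_of_nonpos (hf j hj)

theorem sum_max_zero (hf : SignCoherentOn s f) :
    ∑ j ∈ s, max (f j) 0 = max (∑ j ∈ s, f j) 0 := by
  rcases hf with hf | hf
  · rw [max_eq_left (sum_nonneg hf)]
    exact sum_congr rfl fun j hj => max_eq_left (hf j hj)
  · rw [max_eq_right (sum_nonpos hf)]
    exact sum_eq_zero fun j hj => max_eq_right (hf j hj)

end SignCoherentOn

section Amalgamation

variable {I J : Type*} [Fintype I] [DecidableEq J] {π : I → J} {k : I}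

theorem filter_fiber_eq_singleton (hk : ∀ j, π j = π k → j = k) :
    univ.filter (fun j => π j = π k) = {k} := by
  ext j
  simpa using ⟨hk j, fun h => h ▸ rfl⟩

theorem amalg_apply_left_of_fiber_singleton (hk : ∀ j, π j = π k → j = k)
    (B : I → I → ℚ) (q : J) :
    amalg π B (π k) q = ∑ b ∈ univ.filter (fun b => π b = q), B k b := by
  rw [amalg, filter_fiber_eq_singleton hk, sum_singleton]

theorem amalg_apply_right_of_fiber_singleton (hk : ∀ j, π j = π k → j = k)
    (B : I → I → ℚ) (p : J) :
    amalg π B p (π k) = ∑ a ∈ univ.filter (fun a => π a = p), B a k := by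
  simp only [amalg, filter_fiber_eq_singleton hk, sum_singleton]

variable [DecidableEq I] (B : I → I → ℚ)

theorem amalg_matMut_left (hk : ∀ j, π j = π k → j = k) (q : J) :
    amalg π (matMut B k) (π k) q = -amalg π B (π k) q := by
  simp only [amalg_apply_left_of_fiber_singleton hk, ← sum_neg_distrib, matMut, true_or,
    if_true]

theorem amalg_matMut_right (hk : ∀ j, π j = π k → j = k) (p : J) :
    amalg π (matMut B k) p (π k) = -amalg π B p (π k) := by
  simp only [amalg_apply_right_of_fiber_singleton hk, ← sum_neg_distrib, matMut, or_true,
    if_true]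

theorem amalg_matMut_of_ne {p q : J} (hp : p ≠ π k) (hq : q ≠ π k) :
    amalg π (matMut B k) p q = amalg π B p q +
      ((∑ a ∈ univ.filter (fun a => π a = p), |B a k|) *
          ∑ b ∈ univ.filter (fun b => π b = q), B k b +
        (∑ a ∈ univ.filter (fun a => π a = p), B a k) *
          ∑ b ∈ univ.filter (fun b => π b = q), |B k b|) / 2 := by
  simp only [amalg, sum_mul_sum, ← sum_add_distrib, sum_div]
  refine sum_congr rfl fun a ha => sum_congr rfl fun b hb => ?_
  have hak : a ≠ k := by rintro rfl; exact hp (mem_filter.mp ha).2.symm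
  have hbk : b ≠ k := by rintro rfl; exact hq (mem_filter.mp hb).2.symm
  rw [matMut, if_neg (by tauto)]

end Amalgamation

theorem amalgamation_commutes_with_mutation_general {I J : Type*}
    [Fintype I] [DecidableEq I] [DecidableEq J]
    (π : I → J)
    (B : I → I → ℚ) (d : I → ℚ) (hd : ∀ i, 0 < d i)
    (hB : ∀ i j, B i j * d j = B j i * d i)
    (k : I) (hk : ∀ j, π j = π k → j = k)
    (hsign : ∀ j l, π j = π l →
      (0 ≤ B j k ∧ 0 ≤ B l k) ∨ (B j k ≤ 0 ∧ B l k ≤ 0)) :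
    (∀ i : J, ∑ j ∈ univ.filter (fun j => π j = i), max (B j k) 0
        = max (∑ j ∈ univ.filter (fun j => π j = i), B j k) 0)
    ∧ amalg π (matMut B k) = matMut (amalg π B) (π k) := by
  have hcol : ∀ p, SignCoherentOn (univ.filter (fun j => π j = p)) (B · k) := fun p =>
    .of_pairwise fun j hj l hl => hsign j l ((mem_filter.mp hj).2.trans (mem_filter.mp hl).2.symm)
  have hrow : ∀ q, SignCoherentOn (univ.filter (fun j => π j = q)) (B k ·) := fun q =>
    (hcol q).of_nonneg_mul fun j _ => ⟨d k / d j, (div_pos (hd k) (hd j)).le, by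
      rw [div_mul_eq_mul_div, eq_div_iff (hd j).ne', hB, mul_comm]⟩
  refine ⟨fun i => (hcol i).sum_max_zero, funext fun p => funext fun q => ?_⟩
  by_cases hp : p = π k
  · subst hp
    rw [amalg_matMut_left B hk, matMut, if_pos (Or.inl rfl)]
  by_cases hq : q = π k
  · subst hq
    rw [amalg_matMut_right B hk, matMut, if_pos (Or.inr rfl)]
  rw [amalg_matMut_of_ne B hp hq, matMut, if_neg (by tauto),
    amalg_apply_right_of_fiber_singleton hk, amalg_apply_left_of_fiber_singleton hk,
    (hcol p).sum_abs, (hrow q).sum_abs]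

/-- Amalgamation commutes with mutation at an index on which `π` is injective,
provided the entries `B_{jk}` have a constant sign along each fiber of `π`. -/
theorem amalgamation_commutes_with_mutation {I J : Type*}
    [Fintype I] [Fintype J] [DecidableEq I] [DecidableEq J]
    (π : I → J) (hsurj : Function.Surjective π)
    (B : I → I → ℚ) (d : I → ℚ) (hd : ∀ i, 0 < d i)
    (hB : ∀ i j, B i j * d j = B j i * d i)
    (hglue : ∀ i j, i ≠ j → π i = π j → B i j = 0)
    (k : I) (hk : ∀ j, π j = π k → j = k)
    (hsign : ∀ j l, π j = π l →
      (0 ≤ B j k ∧ 0 ≤ B l k) ∨ (B j k ≤ 0 ∧ B l k ≤ 0)) :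
    (∀ i : J, ∑ j ∈ univ.filter (fun j => π j = i), max (B j k) 0
        = max (∑ j ∈ univ.filter (fun j => π j = i), B j k) 0)
    ∧ amalg π (matMut B k) = matMut (amalg π B) (π k) :=
  amalgamation_commutes_with_mutation_general π B d hd hB k hk hsign
end

section
/- Let π : I → Ĩ be a surjection and for each i ∈ I let X_i be an element of a commutative field; define X̃_j = Π_{π(i)=j} X_i. Fix k ∈ I with π injective at k, and suppose B : I×I → ℤ satisfies: for all j, ℓ in the same fiber of π, B_{jk} and B_{ℓk} are both ≥ 0 or both ≤ 0. Then for i ≠ π(k): Π_{π(j)=i} ( X_j · X_k^{[B_{jk}]_+} (1+X_k)^{-B_{jk}} ) = X̃_i · X_k^{[B̃_{ik}]_+} (1+X_k)^{-B̃_{ik}}, where B̃_{ik} = Σ_{π(j)=i} B_{jk} and [x]_+ = max(x,0). -/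
/-!
Integer powers of the nonzero elements `X_k` and `1 + X_k` turn sums of exponents into products,
so the identity reduces to `Σ_{π(j)=i} [B_{jk}]_+ = [Σ_{π(j)=i} B_{jk}]_+`. This holds because
the `B_{jk}` over a fiber of `π` all have the same sign.
-/

open Finset

lemma zpow_sum₀ {α G : Type*} [CommGroupWithZero G] {x : G} (hx : x ≠ 0)
    (s : Finset α) (f : α → ℤ) :
    x ^ (∑ i ∈ s, f i) = ∏ i ∈ s, x ^ f i := by
  induction s using Finset.cons_induction with
  | empty => simp
  | cons a s ha ih => rw [sum_cons, prod_cons, zpow_add₀ hx, ih]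

lemma forall_nonneg_or_forall_nonpos_of_pairwise {α M : Type*} [LinearOrder M] [Zero M]
    {s : Finset α} {f : α → M}
    (h : ∀ j ∈ s, ∀ l ∈ s, (0 ≤ f j ∧ 0 ≤ f l) ∨ (f j ≤ 0 ∧ f l ≤ 0)) :
    (∀ j ∈ s, 0 ≤ f j) ∨ (∀ j ∈ s, f j ≤ 0) := by
  by_contra! ⟨⟨j, hj, hj_neg⟩, ⟨l, hl, hl_pos⟩⟩
  rcases h j hj l hl with ⟨hj_nonneg, -⟩ | ⟨-, hl_nonpos⟩
  · exact hj_nonneg.not_gt hj_neg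
  · exact hl_nonpos.not_gt hl_pos

lemma sum_max_zero_of_sign_coherent {α M : Type*} [AddCommMonoid M] [LinearOrder M]
    [IsOrderedAddMonoid M] {s : Finset α} {f : α → M}
    (h : (∀ j ∈ s, 0 ≤ f j) ∨ (∀ j ∈ s, f j ≤ 0)) :
    ∑ j ∈ s, max (f j) 0 = max (∑ j ∈ s, f j) 0 := by
  rcases h with h | h
  · rw [sum_congr rfl fun j hj => max_eq_left (h j hj), max_eq_left (sum_nonneg h)]
  · rw [sum_congr rfl fun j hj => max_eq_right (h j hj), max_eq_right (sum_nonpos h),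
      sum_const_zero]

theorem amalgamation_X_transformation_general {I J F : Type*} [Fintype I]
    [DecidableEq J] [Field F]
    (π : I → J)
    (X : I → F) (B : I → I → ℤ)
    (k : I)
    (hsign : ∀ j l, π j = π l →
      (0 ≤ B j k ∧ 0 ≤ B l k) ∨ (B j k ≤ 0 ∧ B l k ≤ 0))
    (hX : X k ≠ 0) (h1 : 1 + X k ≠ 0)
    (i : J) :
    ∏ j ∈ univ.filter (fun j => π j = i),
        (X j * X k ^ (max (B j k) 0) * (1 + X k) ^ (-(B j k)))
      = (∏ j ∈ univ.filter (fun j => π j = i), X j)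
        * X k ^ (max (∑ j ∈ univ.filter (fun j => π j = i), B j k) 0)
        * (1 + X k) ^ (-(∑ j ∈ univ.filter (fun j => π j = i), B j k)) := by
  have hfiber : ∀ j ∈ univ.filter (fun j => π j = i), ∀ l ∈ univ.filter (fun j => π j = i),
      (0 ≤ B j k ∧ 0 ≤ B l k) ∨ (B j k ≤ 0 ∧ B l k ≤ 0) := by
    intro j hj l hl
    exact hsign j l ((mem_filter.1 hj).2.trans (mem_filter.1 hl).2.symm)
  rw [← sum_max_zero_of_sign_coherent (forall_nonneg_or_forall_nonpos_of_pairwise hfiber),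
    ← sum_neg_distrib, zpow_sum₀ hX, zpow_sum₀ h1, prod_mul_distrib, prod_mul_distrib]

/-- The X-coordinate cluster transformation formula commutes with the
amalgamation map: for `i ≠ π(k)`,
`Π_{π(j)=i} ( X_j X_k^{[B_{jk}]_+} (1+X_k)^{-B_{jk}} )
  = X̃_i X_k^{[B̃_{ik}]_+} (1+X_k)^{-B̃_{ik}}`. -/
theorem amalgamation_X_transformation {I J F : Type*} [Fintype I]
    [DecidableEq I] [DecidableEq J] [Field F]
    (π : I → J) (hsurj : Function.Surjective π)
    (X : I → F) (B : I → I → ℤ)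
    (k : I) (hk : ∀ j, π j = π k → j = k)
    (hsign : ∀ j l, π j = π l →
      (0 ≤ B j k ∧ 0 ≤ B l k) ∨ (B j k ≤ 0 ∧ B l k ≤ 0))
    (hX : X k ≠ 0) (h1 : 1 + X k ≠ 0)
    (i : J) (hi : i ≠ π k) :
    ∏ j ∈ univ.filter (fun j => π j = i),
        (X j * X k ^ (max (B j k) 0) * (1 + X k) ^ (-(B j k)))
      = (∏ j ∈ univ.filter (fun j => π j = i), X j)
        * X k ^ (max (∑ j ∈ univ.filter (fun j => π j = i), B j k) 0)
        * (1 + X k) ^ (-(∑ j ∈ univ.filter (fun j => π j = i), B j k)) :=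
  amalgamation_X_transformation_general π X B k hsign hX h1 i
end

section
/- For the Cartan matrix C of type A_1 (r = 1, C = (2)), the normalized Q-system recurrence Q̃_{n+1} = ((Q̃_n)^2 + 1)/Q̃_{n−1} with initial values Q̃_0, Q̃_1 in a field produces elements that are Laurent polynomials in Q̃_0 and Q̃_1 with integer coefficients, for all n ≥ 0. -/
/-!
The recurrence `Q (n+2) Q n = Q (n+1)^2 + 1` linearises: subtracting two consecutive instances
shows that `(Q (n+2) + Q n) / Q (n+1)` does not depend on `n`, and evaluating it at `n = 0`
gives `Q (n+2) + Q n = (x^2 + y^2 + 1)/(x y) · Q (n+1)`. Laurent polynomials in `x, y` are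
closed under this linear recurrence, so induction on `n` finishes the proof.
-/

open MvPolynomial

section Laurent

variable {R : Type*} [CommRing R]

-- Membership of `a` in `ℤ[x^±1, y^±1]`, phrased without inverting `x` and `y`.
def IsLaurentIn (x y a : R) : Prop :=
  ∃ (f : MvPolynomial (Fin 2) ℤ) (i j : ℕ), a * x ^ i * y ^ j = eval₂ (Int.castRingHom R) ![x, y] f

variable {x y a b : R}

theorem isLaurentIn_of_eval₂_eq (f : MvPolynomial (Fin 2) ℤ)
    (h : eval₂ (Int.castRingHom R) ![x, y] f = a) : IsLaurentIn x y a :=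
  ⟨f, 0, 0, by simp [h]⟩

theorem eval₂_X_pow_mul_X_pow (i j : ℕ) :
    eval₂ (Int.castRingHom R) ![x, y] (X 0 ^ i * X 1 ^ j) = x ^ i * y ^ j := by
  simp

theorem IsLaurentIn.mul (ha : IsLaurentIn x y a) (hb : IsLaurentIn x y b) :
    IsLaurentIn x y (a * b) := by
  obtain ⟨f, i, j, hf⟩ := ha
  obtain ⟨g, k, l, hg⟩ := hb
  refine ⟨f * g, i + k, j + l, ?_⟩
  rw [eval₂_mul, ← hf, ← hg]
  ring

theorem IsLaurentIn.sub (ha : IsLaurentIn x y a) (hb : IsLaurentIn x y b) :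
    IsLaurentIn x y (a - b) := by
  obtain ⟨f, i, j, hf⟩ := ha
  obtain ⟨g, k, l, hg⟩ := hb
  refine ⟨f * (X 0 ^ k * X 1 ^ l) - g * (X 0 ^ i * X 1 ^ j), i + k, j + l, ?_⟩
  rw [eval₂_sub, eval₂_mul, eval₂_X_pow_mul_X_pow, eval₂_mul, eval₂_X_pow_mul_X_pow, ← hf, ← hg]
  ring

theorem IsLaurentIn.of_mul_monomial (h : IsLaurentIn x y (a * (x * y))) : IsLaurentIn x y a := by
  obtain ⟨f, i, j, hf⟩ := h
  exact ⟨f, i + 1, j + 1, by rw [← hf]; ring⟩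

end Laurent

section QSystem

variable {R : Type*} [CommRing R] {Q : ℕ → R}

theorem qsystem_conserved_step (hrec : ∀ n, Q (n + 2) * Q n = Q (n + 1) ^ 2 + 1) (n : ℕ) :
    (Q (n + 3) + Q (n + 1)) * Q (n + 1) = (Q (n + 2) + Q n) * Q (n + 2) := by
  linear_combination hrec (n + 1) - hrec n

theorem qsystem_linear_recurrence [IsDomain R] (hQ : ∀ n, Q n ≠ 0)
    (hrec : ∀ n, Q (n + 2) * Q n = Q (n + 1) ^ 2 + 1) (n : ℕ) :
    (Q (n + 2) + Q n) * (Q 0 * Q 1) = (Q 0 ^ 2 + Q 1 ^ 2 + 1) * Q (n + 1) := by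
  induction n with
  | zero => linear_combination Q 1 * hrec 0
  | succ m ih =>
    refine mul_right_cancel₀ (hQ (m + 1)) ?_
    linear_combination Q 0 * Q 1 * qsystem_conserved_step hrec m + Q (m + 2) * ih

theorem qsystem_isLaurentIn [IsDomain R] (hQ : ∀ n, Q n ≠ 0)
    (hrec : ∀ n, Q (n + 2) * Q n = Q (n + 1) ^ 2 + 1) (n : ℕ) :
    IsLaurentIn (Q 0) (Q 1) (Q n) := by
  induction n using Nat.twoStepInduction with
  | zero => exact isLaurentIn_of_eval₂_eq (X 0) (by simp)
  | one => exact isLaurentIn_of_eval₂_eq (X 1) (by simp)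
  | more m hm hm1 =>
    have hcoeff : IsLaurentIn (Q 0) (Q 1) (Q 0 ^ 2 + Q 1 ^ 2 + 1) :=
      isLaurentIn_of_eval₂_eq (X 0 ^ 2 + X 1 ^ 2 + 1) (by simp)
    have hxy : IsLaurentIn (Q 0) (Q 1) (Q 0 * Q 1) := isLaurentIn_of_eval₂_eq (X 0 * X 1) (by simp)
    have hstep : Q (m + 2) * (Q 0 * Q 1) =
        (Q 0 ^ 2 + Q 1 ^ 2 + 1) * Q (m + 1) - Q m * (Q 0 * Q 1) := by
      linear_combination qsystem_linear_recurrence hQ hrec m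
    refine IsLaurentIn.of_mul_monomial ?_
    rw [hstep]
    exact (hcoeff.mul hm1).sub (hm.mul hxy)

end QSystem

theorem A1_Qsystem_laurent_general {F : Type*} [Field F] (x y : F)
    (Q : ℕ → F)
    (h0 : Q 0 = x) (h1 : Q 1 = y) (hQ : ∀ n, Q n ≠ 0)
    (hrec : ∀ n, Q (n + 2) * Q n = (Q (n + 1)) ^ 2 + 1) :
    ∀ n, ∃ (f : MvPolynomial (Fin 2) ℤ) (i j : ℕ),
      Q n * x ^ i * y ^ j = MvPolynomial.eval₂ (Int.castRingHom F) ![x, y] f := by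
  subst h0 h1
  exact qsystem_isLaurentIn hQ hrec

/-- Laurent phenomenon for the A₁ normalized Q-system: every term of the
recurrence `Q̃_{n+1} = ((Q̃_n)^2 + 1)/Q̃_{n−1}` is a Laurent polynomial with
integer coefficients in the initial values `Q̃_0 = x`, `Q̃_1 = y`. -/
theorem A1_Qsystem_laurent {F : Type*} [Field F] (x y : F)
    (hx : x ≠ 0) (hy : y ≠ 0) (Q : ℕ → F)
    (h0 : Q 0 = x) (h1 : Q 1 = y) (hQ : ∀ n, Q n ≠ 0)
    (hrec : ∀ n, Q (n + 2) * Q n = (Q (n + 1)) ^ 2 + 1) :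
    ∀ n, ∃ (f : MvPolynomial (Fin 2) ℤ) (i j : ℕ),
      Q n * x ^ i * y ^ j = MvPolynomial.eval₂ (Int.castRingHom F) ![x, y] f :=
  A1_Qsystem_laurent_general x y Q h0 h1 hQ hrec
end

section
/- Let C be an r×r symmetrizable Cartan matrix and W its Weyl group acting on the root lattice Q = ⊕ ℤα_j via s_m(α_j) = α_j − C_{mj} α_m (in the basis of simple roots). Let c = s_1 ⋯ s_r. Then for 1 ≤ k ≤ i ≤ r, the weight s_k s_{k+1} ⋯ s_i ω_i equals ω_i + Σ_{j=k}^{i} ( Σ_{k ≤ a_1 = j < a_2 < ⋯ < a_ℓ = i} (−1)^ℓ Π_{m=1}^{ℓ−1} C_{a_m, a_{m+1}} ) α_j, where the inner sum is over all strictly increasing sequences from j to i (of any length ℓ ≥ 1), and the empty product (ℓ = 1) equals 1. -/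
/-!
Write `c j i` for the coefficient of `α j`. Splitting off the first step `k = a₁ < a₂ = j` of a
chain from `k` to `i` gives `c i i = -1` and `c k i = -∑_{k < j ≤ i} C k j * c j i`. On the other
hand, by induction `s_{k+1} ⋯ s_i ω_i = ω_i + ∑_{k < j ≤ i} c j i • α j`, and `s_k` subtracts
`(∑_{k < j ≤ i} C k j * c j i) • α k` from this since `⟨ω_i | α_k^∨⟩ = 0`: that is `c k i • α k`.
-/

open Finset

section

variable {ι : Type*} [LinearOrder ι]

theorem Finset.sort_eq_cons_erase_of_isLeast {S : Finset ι} {j : ι}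
    (hj : IsLeast (S : Set ι) j) : S.sort = j :: (S.erase j).sort := by
  conv_lhs => rw [← insert_erase hj.1]
  exact sort_insert _ (fun b hb => hj.2 (mem_of_mem_erase hb)) (notMem_erase j S)

variable {R : Type*} [CommRing R]

def chainProd (C : ι → ι → R) (S : Finset ι) : R :=
  ((S.sort.zip S.sort.tail).map fun p => C p.1 p.2).prod

theorem chainProd_insert_of_lt (C : ι → ι → R) {S : Finset ι} {j k : ι}
    (hj : IsLeast (S : Set ι) j) (hkj : k < j) :
    chainProd C (insert k S) = C k j * chainProd C S := by
  have hkS : k ∉ S := fun hk => (hj.2 hk).not_gt hkj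
  have hk : IsLeast ((insert k S : Finset ι) : Set ι) k := by
    rw [coe_insert]
    refine ⟨Set.mem_insert k _, ?_⟩
    rintro b (rfl | hb)
    exacts [le_rfl, hkj.le.trans (hj.2 hb)]
  rw [chainProd, sort_eq_cons_erase_of_isLeast hk, erase_insert hkS,
    chainProd, sort_eq_cons_erase_of_isLeast hj]
  simp

variable [LocallyFiniteOrder ι]

theorem Finset.exists_Ioc_eq_Icc {a b : ι} (h : a < b) : ∃ c ≤ b, Ioc a b = Icc c b := by
  have hne : (Ioc a b).Nonempty := ⟨b, right_mem_Ioc.2 h⟩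
  refine ⟨(Ioc a b).min' hne, (mem_Ioc.1 (min'_mem _ hne)).2, ?_⟩
  ext x
  simp only [mem_Icc]
  refine ⟨fun hx => ⟨min'_le _ _ hx, (mem_Ioc.1 hx).2⟩, fun hx => mem_Ioc.2 ⟨?_, hx.2⟩⟩
  exact (mem_Ioc.1 (min'_mem _ hne)).1.trans_le hx.1

/-- The chains `j = a₁ < a₂ < ⋯ < a_ℓ = i`, each encoded by its set of entries. -/
def chains (j i : ι) : Finset (Finset ι) :=
  (Icc j i).powerset.filter fun S => j ∈ S ∧ i ∈ S

theorem mem_chains {S : Finset ι} {j i : ι} :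
    S ∈ chains j i ↔ S ⊆ Icc j i ∧ j ∈ S ∧ i ∈ S := by
  simp [chains]

theorem isLeast_of_mem_chains {S : Finset ι} {j i : ι} (hS : S ∈ chains j i) :
    IsLeast (S : Set ι) j := by
  rw [mem_chains] at hS
  exact ⟨hS.2.1, fun b hb => (mem_Icc.1 (hS.1 hb)).1⟩

theorem chains_self (i : ι) : chains i i = {{i}} := by
  ext S
  simp only [mem_chains, Icc_self, subset_singleton_iff, mem_singleton, and_self]
  constructor
  · rintro ⟨rfl | rfl, hi⟩
    exacts [absurd hi (notMem_empty i), rfl]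
  · rintro rfl
    simp

theorem sum_chains_of_lt {M : Type*} [AddCommMonoid M] (f : Finset ι → M) {k i : ι}
    (hki : k < i) :
    ∑ S ∈ chains k i, f S = ∑ j ∈ Ioc k i, ∑ T ∈ chains j i, f (insert k T) := by
  rw [sum_sigma']
  refine (sum_bij (fun p _ => insert k p.2) ?_ ?_ ?_ fun _ _ => rfl).symm
  · rintro ⟨j, T⟩ hp
    simp only [mem_sigma, mem_Ioc, mem_chains] at hp ⊢
    obtain ⟨⟨hkj, -⟩, hT, -, hiT⟩ := hp
    exact ⟨insert_subset (left_mem_Icc.2 hki.le) (hT.trans (Icc_subset_Icc_left hkj.le)),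
      mem_insert_self k T, mem_insert_of_mem hiT⟩
  · rintro ⟨j₁, T₁⟩ hp₁ ⟨j₂, T₂⟩ hp₂ h
    simp only [mem_sigma, mem_Ioc] at hp₁ hp₂ h
    have hk₁ : k ∉ T₁ := fun hk => ((isLeast_of_mem_chains hp₁.2).2 hk).not_gt hp₁.1.1
    have hk₂ : k ∉ T₂ := fun hk => ((isLeast_of_mem_chains hp₂.2).2 hk).not_gt hp₂.1.1
    obtain rfl : T₁ = T₂ := by rw [← erase_insert hk₁, h, erase_insert hk₂]
    obtain rfl : j₁ = j₂ :=
      (isLeast_of_mem_chains hp₁.2).unique (isLeast_of_mem_chains hp₂.2)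
    rfl
  · intro S hS
    obtain ⟨hSsub, hkS, hiS⟩ := mem_chains.1 hS
    have hne : (S.erase k).Nonempty := ⟨i, mem_erase.2 ⟨hki.ne', hiS⟩⟩
    refine ⟨⟨(S.erase k).min' hne, S.erase k⟩, ?_, insert_erase hkS⟩
    have hmin := min'_mem _ hne
    have hlt : ∀ b ∈ S.erase k, k < b := fun b hb =>
      (mem_Icc.1 (hSsub (mem_of_mem_erase hb))).1.lt_of_ne (ne_of_mem_erase hb).symm
    simp only [mem_sigma, mem_Ioc, mem_chains]
    exact ⟨⟨hlt _ hmin, (mem_Icc.1 (hSsub (mem_of_mem_erase hmin))).2⟩,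
      fun b hb => mem_Icc.2 ⟨min'_le _ _ hb, (mem_Icc.1 (hSsub (mem_of_mem_erase hb))).2⟩,
      hmin, mem_erase.2 ⟨hki.ne', hiS⟩⟩

def chainCoeff (C : ι → ι → R) (j i : ι) : R :=
  ∑ S ∈ chains j i, (-1) ^ #S * chainProd C S

theorem chainCoeff_self (C : ι → ι → R) (i : ι) : chainCoeff C i i = -1 := by
  simp [chainCoeff, chains_self, chainProd]

theorem chainCoeff_of_lt (C : ι → ι → R) {k i : ι} (hki : k < i) :
    chainCoeff C k i = -∑ j ∈ Ioc k i, C k j * chainCoeff C j i := by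
  rw [chainCoeff, sum_chains_of_lt _ hki, ← sum_neg_distrib]
  refine sum_congr rfl fun j hj => ?_
  rw [chainCoeff, mul_sum, ← sum_neg_distrib]
  refine sum_congr rfl fun T hT => ?_
  have hT := isLeast_of_mem_chains hT
  have hkT : k ∉ T := fun hk => (hT.2 hk).not_gt (mem_Ioc.1 hj).1
  rw [card_insert_of_notMem hkT, chainProd_insert_of_lt C hT (mem_Ioc.1 hj).1]
  ring

theorem foldr_sort_Icc_reflections {V : Type*} [AddCommGroup V] [Module R V]
    (C : ι → ι → R) (α : ι → V) (A : ι → V →ₗ[R] R) (hAα : ∀ m j, A m (α j) = C m j)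
    {i : ι} {w : V} (hw_self : A i w = 1) (hw_lt : ∀ m < i, A m w = 0) {k : ι} (hki : k ≤ i) :
    (Icc k i).sort.foldr (fun m v => v - A m v • α m) w
      = w + ∑ j ∈ Icc k i, chainCoeff C j i • α j := by
  induction hn : #(Icc k i) using Nat.strong_induction_on generalizing k with
  | _ n ih =>
  obtain rfl | hki := hki.eq_or_lt
  · simp [hw_self, chainCoeff_self, sub_eq_add_neg]
  obtain ⟨j, hji, hIoc⟩ := exists_Ioc_eq_Icc hki
  have hk_notMem : k ∉ Icc j i := hIoc ▸ left_notMem_Ioc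
  have hIcc : Icc k i = insert k (Icc j i) := by rw [← hIoc, Ioc_insert_left hki.le]
  have hcard : #(Icc j i) < n := by
    rw [← hn, hIcc, card_insert_of_notMem hk_notMem]
    exact Nat.lt_succ_self _
  rw [hIcc, sort_insert _ (fun b hb => (mem_Ioc.1 (hIoc ▸ hb)).1.le) hk_notMem, List.foldr_cons,
    ih _ hcard hji rfl, sum_insert hk_notMem, chainCoeff_of_lt C hki, hIoc]
  simp only [map_add, map_sum, map_smul, hw_lt k hki, hAα, smul_eq_mul, zero_add, neg_smul,
    mul_comm]
  abel

end

theorem List.filter_finRange_eq_sort_Icc {n : ℕ} (k i : Fin n) :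
    (List.finRange n).filter (fun m => decide (k ≤ m ∧ m ≤ i)) = (Icc k i).sort := by
  have hfin : ((List.finRange n).filter fun m => decide (k ≤ m ∧ m ≤ i)).toFinset = Icc k i := by
    ext
    simp
  rw [← hfin]
  exact ((List.toFinset_sort _ ((List.nodup_finRange n).filter _)).2
    ((List.pairwise_le_finRange n).sublist List.filter_sublist)).symm

theorem partial_coxeter_weight_formula_general {r : ℕ} (C : Fin r → Fin r → ℚ)
    {V : Type*} [AddCommGroup V] [Module ℚ V]
    (ω α : Fin r → V) (A : Fin r → V →ₗ[ℚ] ℚ)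
    (hAω : ∀ m i, A m (ω i) = if i = m then 1 else 0)
    (hAα : ∀ m j, A m (α j) = C m j)
    (k i : Fin r) (hki : k ≤ i) :
    (let s : Fin r → V → V := fun m v => v - A m v • α m
     ((List.finRange r).filter (fun m => decide (k ≤ m ∧ m ≤ i))).foldr s (ω i))
    = ω i + ∑ j ∈ Finset.Icc k i,
        (∑ S ∈ (Finset.Icc j i).powerset.filter (fun S => j ∈ S ∧ i ∈ S),
          (-1 : ℚ) ^ S.card *
            (((S.sort (· ≤ ·)).zip (S.sort (· ≤ ·)).tail).map
              (fun p => C p.1 p.2)).prod) • α j := by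
  rw [List.filter_finRange_eq_sort_Icc]
  exact foldr_sort_Icc_reflections C α A hAα (by simp [hAω])
    (fun m hm => by simp [hAω, hm.ne']) hki

/-- For `k ≤ i`, the weight `s_k s_{k+1} ⋯ s_i ω_i` equals
`ω_i + Σ_{j=k}^{i} ( Σ_{j = a_1 < a_2 < ⋯ < a_ℓ = i} (−1)^ℓ Π_m C_{a_m,a_{m+1}} ) α_j`,
where the inner sum is over all strictly increasing sequences from `j` to `i`
(encoded as subsets `S ⊆ [j,i]` with `j, i ∈ S`, listed in increasing order),
and the empty product (`ℓ = 1`) equals `1`.  Notation: `A m (ω i) = δ_{im}`,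
`A m (α j) = C_{mj}`, and `s m λ = λ − (A m λ) α_m`. -/
theorem partial_coxeter_weight_formula {r : ℕ} (C : Fin r → Fin r → ℚ)
    (hdiag : ∀ i, C i i = 2) (hoff : ∀ i j, i ≠ j → C i j ≤ 0)
    (d : Fin r → ℚ) (hd : ∀ i, 0 < d i)
    (hsym : ∀ i j, d i * C i j = d j * C j i)
    {V : Type*} [AddCommGroup V] [Module ℚ V]
    (ω α : Fin r → V) (A : Fin r → V →ₗ[ℚ] ℚ)
    (hAω : ∀ m i, A m (ω i) = if i = m then 1 else 0)
    (hAα : ∀ m j, A m (α j) = C m j)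
    (k i : Fin r) (hki : k ≤ i) :
    (let s : Fin r → V → V := fun m v => v - A m v • α m
     ((List.finRange r).filter (fun m => decide (k ≤ m ∧ m ≤ i))).foldr s (ω i))
    = ω i + ∑ j ∈ Finset.Icc k i,
        (∑ S ∈ (Finset.Icc j i).powerset.filter (fun S => j ∈ S ∧ i ∈ S),
          (-1 : ℚ) ^ S.card *
            (((S.sort (· ≤ ·)).zip (S.sort (· ≤ ·)).tail).map
              (fun p => C p.1 p.2)).prod) • α j :=
  partial_coxeter_weight_formula_general C ω α A hAω hAα k i hki
end
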